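/- Let K be a complete category and G : K → Set a continuous functor. Then the left Kan extension Lan_Y G : PK → Set of G along the Yoneda embedding Y : K → PK (given on objects by (Lan_Y G)(X) = X * G, the colimit of G weighted by X) is continuous. -/

import Mathlib

open CategoryTheory CategoryTheory.Limits Opposite

universe w v v' u u'

/-- A functor `S : K ⥤ M` is (`w`-)small if it is the left Kan extension of its
restriction to some small full subcategory of `K`. -/
def IsSmallFunctor {K : Type u} [Category.{v} K] {M : Type u'} [Category.{v'} M]
    (S : K ⥤ M) : Prop :=
  ∃ P : K → Prop, Small.{w} (Subtype P) ∧
    S.IsLeftKanExtension (𝟙 (ObjectProperty.ι P ⋙ S))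

/-- Representable presheaves are small. -/
theorem isSmallFunctor_yoneda_obj {K : Type u} [Category.{v} K] (A : K) :
    IsSmallFunctor.{w} (yoneda.obj A) := by
  refine ⟨fun X => X = op A, ?_, ?_⟩
  · have : Subsingleton {X : Kᵒᵖ // X = op A} :=
      ⟨fun X Y => Subtype.ext (X.2.trans Y.2.symm)⟩
    infer_instance
  · set P : Kᵒᵖ → Prop := fun X => X = op A with hP
    set ι := ObjectProperty.ι P with hι
    constructor
    refine ⟨IsInitial.ofUniqueHom (fun E => StructuredArrow.homMk
      (yonedaEquiv.symm (E.hom.app ⟨op A, rfl⟩ (𝟙 A))) ?_) ?_⟩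
    · ext X f
      have hnat := NatTrans.naturality_apply E.hom
        (show (⟨op A, rfl⟩ : ObjectProperty.FullSubcategory P) ⟶ X from ObjectProperty.homMk f.op) (𝟙 A)
      simp [ι] at hnat ⊢
      exact hnat.symm
    · intro E m
      apply StructuredArrow.hom_ext
      ext Y g
      have hx := congr_arg (fun h => h.app (⟨op A, rfl⟩ : ObjectProperty.FullSubcategory P) (𝟙 A)) m.w
      have hnat := NatTrans.naturality_apply m.right (Quiver.Hom.op g : op A ⟶ Y) (𝟙 A)
      have h1 : m.right.app (op A) (𝟙 A) = E.hom.app ⟨op A, rfl⟩ (𝟙 A) := by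
        rw [← hx]; rfl
      have h2 : (yoneda.obj A).map (Quiver.Hom.op g) (𝟙 A) = g := by simp; rfl
      show m.right.app Y g = E.right.map (Quiver.Hom.op g) (E.hom.app ⟨op A, rfl⟩ (𝟙 A))
      rw [← h1, ← hnat]
      exact congrArg (m.right.app Y) h2.symm

/-- The category of small presheaves on `K`. -/
abbrev SmallPresheaf (K : Type u) [Category.{v} K] : Type (max u (v + 1)) :=
  ObjectProperty.FullSubcategory (fun F : Kᵒᵖ ⥤ Type v => IsSmallFunctor.{v} F)

/-- The Yoneda embedding of `K` into its category of small presheaves. -/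
def smallYoneda (K : Type u) [Category.{v} K] : K ⥤ SmallPresheaf K where
  obj A := ⟨yoneda.obj A, isSmallFunctor_yoneda_obj A⟩
  map f := ObjectProperty.homMk (yoneda.map f)

/-- `L` is a limit of `S : C ⥤ A` weighted by `φ : C ⥤ Type v`, i.e. morphisms `a ⟶ L`
correspond, naturally in `a`, to natural transformations `φ ⟶ A(a, S-)`. -/
def IsWeightedLimit {C : Type u} [Category.{v} C] {A : Type u'} [Category.{v'} A]
    (φ : C ⥤ Type v) (S : C ⥤ A) (L : A) : Prop :=
  ∃ e : ∀ a : A, (a ⟶ L) ≃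
      ((φ ⋙ uliftFunctor.{v'}) ⟶ (S ⋙ coyoneda.obj (op a) ⋙ uliftFunctor.{v})),
    ∀ (a a' : A) (f : a' ⟶ a) (g : a ⟶ L) (c : C) (x : φ.obj c),
      (e a' (f ≫ g)).app c ⟨x⟩ = ⟨f ≫ ((e a g).app c ⟨x⟩).down⟩

/-- `L` is a colimit of `T : Cᵒᵖ ⥤ A` weighted by `φ : C ⥤ Type v`, i.e. morphisms `L ⟶ a`
correspond, naturally in `a`, to natural transformations `φ ⟶ A(T-, a)`. -/
def IsWeightedColimit {C : Type u} [Category.{v} C] {A : Type u'} [Category.{v'} A]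
    (φ : C ⥤ Type v) (T : Cᵒᵖ ⥤ A) (L : A) : Prop :=
  ∃ e : ∀ a : A, (L ⟶ a) ≃
      ((φ ⋙ uliftFunctor.{v'}) ⟶ (T.rightOp ⋙ yoneda.obj a ⋙ uliftFunctor.{v})),
    ∀ (a a' : A) (f : a ⟶ a') (g : L ⟶ a) (c : C) (x : φ.obj c),
      (e a' (g ≫ f)).app c ⟨x⟩ = ⟨((e a g).app c ⟨x⟩).down ≫ f⟩

/-- A class of weights with small domains. -/
def WeightClass : Type (v + 1) :=
  ∀ C : Cat.{v, v}, (C ⥤ Type v) → Prop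

/-- A category is `Φ`-complete if it has all `φ`-weighted limits for `φ ∈ Φ`. -/
def PhiComplete (Φ : WeightClass.{v}) (A : Type u) [Category.{v'} A] : Prop :=
  ∀ (C : Cat.{v, v}) (φ : C ⥤ Type v), Φ C φ →
    ∀ S : C ⥤ A, ∃ L : A, IsWeightedLimit φ S L

/-- A category is `Φ`-cocomplete if it has all `φ`-weighted colimits for `φ ∈ Φ`. -/
def PhiCocomplete (Φ : WeightClass.{v}) (A : Type u) [Category.{v'} A] : Prop :=
  ∀ (C : Cat.{v, v}) (φ : C ⥤ Type v), Φ C φ →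
    ∀ T : Cᵒᵖ ⥤ A, ∃ L : A, IsWeightedColimit φ T L

/-- A functor is `Φ`-continuous if it preserves all `φ`-weighted limits for `φ ∈ Φ`. -/
def PhiContinuous (Φ : WeightClass.{v}) {A : Type u} [Category.{v'} A]
    {B : Type u'} [Category.{w} B] (F : A ⥤ B) : Prop :=
  ∀ (C : Cat.{v, v}) (φ : C ⥤ Type v), Φ C φ →
    ∀ (S : C ⥤ A) (L : A), IsWeightedLimit φ S L → IsWeightedLimit φ (S ⋙ F) (F.obj L)

/-- The closure of a collection `P` of objects of `A` under `Φ`-weighted colimits. -/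
inductive PhiClosure (Φ : WeightClass.{v}) {A : Type u} [Category.{v'} A]
    (P : A → Prop) : A → Prop
  | base {X : A} (hX : P X) : PhiClosure Φ P X
  | colim {C : Cat.{v, v}} (φ : C ⥤ Type v) (hφ : Φ C φ) (T : Cᵒᵖ ⥤ A)
      (hT : ∀ c : Cᵒᵖ, PhiClosure Φ P (T.obj c)) {L : A}
      (hL : IsWeightedColimit φ T L) : PhiClosure Φ P L

/-- The smallness condition on a class of weights: for every small `C`, the closure of the
representables in the presheaf category of `C` under `Φ`-weighted colimits is small. -/
def SmallnessCondition (Φ : WeightClass.{v}) : Prop :=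
  ∀ C : Cat.{v, v}, EssentiallySmall.{v} (ObjectProperty.FullSubcategory (PhiClosure Φ
    (fun F : Cᵒᵖ ⥤ Type v => ∃ c : C, Nonempty (F ≅ yoneda.obj c))))

/-- The soundness condition on a class of weights: for every small `Φ`-complete `D` and every
`Φ`-continuous `ψ : D ⥤ Type v`, the weighted-colimit functor `ψ * (-) : [Dᵒᵖ, Type v] ⥤ Type v`
(i.e. the small-colimit-preserving extension of `ψ` along the Yoneda embedding) is
`Φ`-continuous. -/
def SoundnessCondition (Φ : WeightClass.{v}) : Prop :=
  ∀ D : Cat.{v, v}, PhiComplete Φ D → ∀ ψ : D ⥤ Type v, PhiContinuous Φ ψ →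
    ∀ T : (Dᵒᵖ ⥤ Type v) ⥤ Type v, PreservesColimitsOfSize.{v, v} T →
      Nonempty ((yoneda : D ⥤ _) ⋙ T ≅ ψ) → PhiContinuous Φ T

/-- `φ` belongs to the saturation of `Φ` if it lies in the closure of the representables
under `Φ`-weighted colimits in the presheaf category over its domain. -/
def InSaturation (Φ : WeightClass.{v}) (C : Cat.{v, v}) (φ : C ⥤ Type v) : Prop :=
  PhiClosure Φ (fun F : C ⥤ Type v => ∃ c : Cᵒᵖ, Nonempty (F ≅ coyoneda.obj c)) φ

/-- A category `J` is `α`-filtered when every diagram with fewer than `α` arrows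
admits a cocone. -/
def IsCardinalFiltered (J : Type u) [Category.{v'} J] (α : Cardinal.{v}) : Prop :=
  ∀ D : Cat.{v, v}, Cardinal.mk (Arrow D) < α → ∀ F : D ⥤ J, Nonempty (Cocone F)

/-- An object `X` is `α`-presentable when its hom-functor preserves `α`-filtered colimits. -/
def IsPresentableObj {K : Type u} [Category.{v} K] (α : Cardinal.{v}) (X : K) : Prop :=
  ∀ J : Cat.{v, v}, IsCardinalFiltered J α →
    PreservesColimitsOfShape J (coyoneda.obj (op X))

/-- `K` is locally `α`-presentable: it is cocomplete and has a small full subcategory of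
`α`-presentable objects such that every object is an `α`-filtered colimit of objects
from it. -/
def IsLocallyPresentableAt (K : Type u) [Category.{v} K] (α : Cardinal.{v}) : Prop :=
  HasColimitsOfSize.{v, v} K ∧ α.IsRegular ∧
    ∃ P : K → Prop, Small.{v} (Subtype P) ∧ (∀ X, P X → IsPresentableObj α X) ∧
      ∀ X : K, ∃ J : Cat.{v, v}, IsCardinalFiltered J α ∧
        ∃ (F : J ⥤ K) (c : Cocone F),
          (∀ j, P (F.obj j)) ∧ c.pt = X ∧ Nonempty (IsColimit c)

/-- `K` is locally presentable. -/
def IsLocallyPresentable (K : Type u) [Category.{v} K] : Prop :=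
  ∃ α : Cardinal.{v}, IsLocallyPresentableAt K α

/-- `PF : PK ⥤ PL` is the (essentially unique) functor sending a small presheaf `X` to the
left Kan extension of `X` along `Fᵒᵖ`. -/
def IsPshExtensionOf {K : Type u} {L : Type u'} [Category.{v} K] [Category.{v} L]
    (F : K ⥤ L) (PF : SmallPresheaf K ⥤ SmallPresheaf L) : Prop :=
  ∃ ε : ObjectProperty.ι (fun X : Kᵒᵖ ⥤ Type v => IsSmallFunctor.{v} X) ⟶
      PF ⋙ ObjectProperty.ι (fun X : Lᵒᵖ ⥤ Type v => IsSmallFunctor.{v} X) ⋙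
        (Functor.whiskeringLeft Kᵒᵖ Lᵒᵖ (Type v)).obj F.op,
    ∀ X : SmallPresheaf K, Functor.IsLeftKanExtension ((PF.obj X).obj) (ε.app X)

open MonoidalCategory in
/-- `D` is the Day convolution `∫^{A,B} K(-, A ⊗ B) × F A × G B` of the presheaves
`F` and `G`: it carries a universal wedge. -/
def IsDayConvolution {K : Type u} [Category.{v} K] [MonoidalCategory K]
    (F G D : Kᵒᵖ ⥤ Type v) : Prop :=
  ∃ u : ∀ A B : K, F.obj (op A) → G.obj (op B) → D.obj (op (A ⊗ B)),
    (∀ (A A' B B' : K) (f : A' ⟶ A) (g : B' ⟶ B) (x : F.obj (op A)) (y : G.obj (op B)),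
      u A' B' (F.map f.op x) (G.map g.op y)
        = D.map (MonoidalCategory.tensorHom f g).op (u A B x y)) ∧
    ∀ (H : Kᵒᵖ ⥤ Type v)
      (p : ∀ A B : K, F.obj (op A) → G.obj (op B) → H.obj (op (A ⊗ B))),
      (∀ (A A' B B' : K) (f : A' ⟶ A) (g : B' ⟶ B) (x : F.obj (op A)) (y : G.obj (op B)),
        p A' B' (F.map f.op x) (G.map g.op y)
          = H.map (MonoidalCategory.tensorHom f g).op (p A B x y)) →
      ∃! τ : D ⟶ H, ∀ (A B : K) (x : F.obj (op A)) (y : G.obj (op B)),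
        τ.app (op (A ⊗ B)) (u A B x y) = p A B x y

/-- The restricted Yoneda embedding of `M` into presheaves on the full subcategory of
`β`-presentable objects. -/
def restrictedYoneda (M : Type u) [Category.{v} M] (β : Cardinal.{v}) :
    M ⥤ ((ObjectProperty.FullSubcategory (IsPresentableObj β : M → Prop))ᵒᵖ ⥤ Type v) :=
  yoneda ⋙ (Functor.whiskeringLeft _ _ _).obj (ObjectProperty.ι _).op

/-!
Write `X * G` as the colimit of `X ∘ π` over `(El G)ᵒᵖ`, where `π : El G ⥤ K` is the category of
elements of `G`; this is the coend `∫^k X k × G k`. It is a small colimit because `X` is small.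
Through the Yoneda bijection `(Y k ⟶ X) ≃ X k`, its colimit cocone is also a colimit cocone of
`G` over `Y ↓ X`, so `X ↦ X * G` is the pointwise left Kan extension of `G` along `Y`, and the
given `T` is isomorphic to it.

Because `K` is complete and `G` is continuous, `El G` is complete, so its opposite is cocomplete.
Colimits of sets over a cocomplete shape commute with all small limits, not just finite ones:
a small family of elements can be moved to one common index (a coproduct), and a small family
of equalities can be witnessed along one common arrow (a wide pushout). Since limits of small
presheaves are pointwise (evaluation at `k` is corepresented by `Y k`), `X ↦ X * G` is continuous.
-/

namespace CategoryTheory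

instance IsFiltered.of_hasColimitsOfSize {J : Type u'} [Category.{v} J]
    [HasColimitsOfSize.{v, v} J] : IsFiltered J :=
  IsFiltered.of_cocone_nonempty.{v} J fun F => ⟨colimit.cocone F⟩

instance CategoryOfElements.hasLimitsOfSize {C : Type u} [Category.{v} C]
    [HasLimitsOfSize.{v, v} C] (A : C ⥤ Type v) [PreservesLimitsOfSize.{v, v} A] :
    HasLimitsOfSize.{v, v} A.Elements :=
  ⟨fun _ _ => inferInstance⟩

namespace Limits.Types

variable {J : Type u'} [Category.{v} J] [HasColimitsOfSize.{v, v} J] {ι : Type v}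
  (F : ι → J ⥤ Type w) [∀ i, HasColimit (F i)]

theorem exists_common_colimit_ι_eq (z : ∀ i, colimit (F i)) :
    ∃ (j : J) (x : ∀ i, (F i).obj j), ∀ i, colimit.ι (F i) j (x i) = z i := by
  choose j x hx using fun i => Types.jointly_surjective' (z i)
  refine ⟨∐ j, fun i => (F i).map (Sigma.ι j i) (x i), fun i => ?_⟩
  rw [colimit.w_apply, hx]

theorem exists_map_eq_of_forall_colimit_ι_eq {j : J} (x x' : ∀ i, (F i).obj j)
    (h : ∀ i, colimit.ι (F i) j (x i) = colimit.ι (F i) j (x' i)) :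
    ∃ (j' : J) (f : j ⟶ j'), ∀ i, (F i).map f (x i) = (F i).map f (x' i) := by
  choose k f hf using fun i =>
    (Types.FilteredColimit.isColimit_eq_iff' (colimit.isColimit (F i)) _ _).1 (h i)
  refine ⟨widePushout j k f, WidePushout.head f, fun i => ?_⟩
  rw [← WidePushout.arrow_ι f i, Functor.map_comp_apply, Functor.map_comp_apply, hf]

end Limits.Types

theorem ObjectProperty.exists_map_eq_of_isLeftKanExtension {C : Type u} [Category.{v} C]
    (P : ObjectProperty C) [Small.{v} (Subtype P)] (W : C ⥤ Type v)
    [W.IsLeftKanExtension (𝟙 (P.ι ⋙ W))] (c : C) (x : W.obj c) :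
    ∃ (p : P.FullSubcategory) (g : p.obj ⟶ c) (y : W.obj p.obj), W.map g y = x := by
  have : Functor.HasPointwiseLeftKanExtension P.ι (P.ι ⋙ W) := fun c => by
    refine (Types.hasColimit_iff_small_colimitType _).2 (small_of_surjective
      (f := fun a : Σ (p : Subtype P) (g : p.1 ⟶ c), W.obj p.1 =>
        (CostructuredArrow.proj P.ι c ⋙ P.ι ⋙ W).ιColimitType
          (CostructuredArrow.mk (show P.ι.obj ⟨a.1.1, a.1.2⟩ ⟶ c from a.2.1)) a.2.2) ?_)
    intro t
    obtain ⟨j, y, rfl⟩ := Functor.ιColimitType_jointly_surjective _ t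
    exact ⟨⟨⟨j.left.obj, j.left.property⟩, j.hom, y⟩, rfl⟩
  obtain ⟨j, y, hy⟩ := Types.jointly_surjective_of_isColimit
    (Functor.isPointwiseLeftKanExtensionOfIsLeftKanExtension W (𝟙 (P.ι ⋙ W)) c) x
  exact ⟨j.left, j.hom, y, hy⟩

lemma CostructuredArrow.cocone_ι_app_mk_map_comp {C : Type u} [Category.{v} C] {D : Type u'}
    [Category.{v'} D] {L : C ⥤ D} {G : C ⥤ Type w} {X : D}
    (c : Cocone (CostructuredArrow.proj L X ⋙ G)) {k k' : C} (h : k ⟶ k') (φ : L.obj k' ⟶ X)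
    (s : G.obj k) :
    c.ι.app (CostructuredArrow.mk (L.map h ≫ φ)) s = c.ι.app (CostructuredArrow.mk φ) (G.map h s) :=
  (ConcreteCategory.congr_hom (c.w (CostructuredArrow.homMk h rfl :
    CostructuredArrow.mk (L.map h ≫ φ) ⟶ CostructuredArrow.mk φ)) s).symm

end CategoryTheory

section SmallYoneda

variable {K : Type u} [Category.{v} K]

def smallYonedaEquiv {k : K} {X : SmallPresheaf K} :
    ((smallYoneda K).obj k ⟶ X) ≃ X.obj.obj (op k) :=
  ((ObjectProperty.fullyFaithfulι _).homEquiv (X := (smallYoneda K).obj k) (Y := X)).trans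
    yonedaEquiv

lemma smallYonedaEquiv_comp {k : K} {X Y : SmallPresheaf K} (f : (smallYoneda K).obj k ⟶ X)
    (τ : X ⟶ Y) : smallYonedaEquiv (f ≫ τ) = τ.hom.app (op k) (smallYonedaEquiv f) :=
  yonedaEquiv_comp f.hom τ.hom

lemma smallYonedaEquiv_naturality {k k' : K} {X : SmallPresheaf K}
    (f : (smallYoneda K).obj k' ⟶ X) (g : k ⟶ k') :
    smallYonedaEquiv ((smallYoneda K).map g ≫ f) = X.obj.map g.op (smallYonedaEquiv f) :=
  (yonedaEquiv_naturality f.hom g).symm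

lemma smallYonedaEquiv_symm_map {k k' : K} {X : SmallPresheaf K} (g : k ⟶ k')
    (x : X.obj.obj (op k')) :
    smallYonedaEquiv.symm (X.obj.map g.op x) = (smallYoneda K).map g ≫ smallYonedaEquiv.symm x :=
  smallYonedaEquiv.injective (by simp [smallYonedaEquiv_naturality])

abbrev smallPresheafEvaluation (k : K) : SmallPresheaf K ⥤ Type v :=
  ObjectProperty.ι _ ⋙ (evaluation Kᵒᵖ (Type v)).obj (op k)

/-- The `ULift` is there because the hom-types of `SmallPresheaf K` live in `Type (max u v)`. -/
def smallPresheafEvaluationUliftIso (k : K) :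
    smallPresheafEvaluation k ⋙ uliftFunctor.{u} ≅ coyoneda.obj (op ((smallYoneda K).obj k)) :=
  NatIso.ofComponents (fun X => (Equiv.ulift.trans smallYonedaEquiv.symm).toIso) fun τ => by
    ext ⟨x⟩
    change smallYonedaEquiv.symm (τ.hom.app _ x) = smallYonedaEquiv.symm x ≫ τ
    apply smallYonedaEquiv.injective
    simp [smallYonedaEquiv_comp]

instance (k : K) : PreservesLimitsOfSize.{v, v} (smallPresheafEvaluation k) :=
  have := preservesLimits_of_natIso (smallPresheafEvaluationUliftIso k).symm
  preservesLimits_of_reflects_of_preserves _ uliftFunctor.{u}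

end SmallYoneda

section WeightedColimit

variable {K : Type u} [Category.{v} K] (G : K ⥤ Type v)

abbrev weightedColimitDiagram (X : Kᵒᵖ ⥤ Type v) : G.Elementsᵒᵖ ⥤ Type v :=
  (CategoryOfElements.π G).op ⋙ X

theorem small_colimitType_weightedColimitDiagram {X : Kᵒᵖ ⥤ Type v}
    (hX : IsSmallFunctor.{v} X) : Small.{v} (weightedColimitDiagram G X).ColimitType := by
  obtain ⟨P, _, _⟩ := hX
  refine small_of_surjective (f := fun a : Σ p : Subtype P, X.obj p.1 × G.obj p.1.unop =>
    (weightedColimitDiagram G X).ιColimitType (op ⟨a.1.1.unop, a.2.2⟩) a.2.1) ?_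
  intro t
  obtain ⟨⟨k, s⟩, x, rfl⟩ := Functor.ιColimitType_jointly_surjective _ t
  obtain ⟨p, g, y, rfl⟩ := ObjectProperty.exists_map_eq_of_isLeftKanExtension P X (op k) x
  let f : G.elementsMk k s ⟶ G.elementsMk p.obj.unop (G.map g.unop s) := ⟨g.unop, rfl⟩
  exact ⟨⟨⟨p.obj, p.property⟩, y, G.map g.unop s⟩,
    (Functor.ιColimitType_map (weightedColimitDiagram G X) f.op y).symm⟩

instance (X : SmallPresheaf K) : HasColimit (weightedColimitDiagram G X.obj) :=
  (Types.hasColimit_iff_small_colimitType _).2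
    (small_colimitType_weightedColimitDiagram G X.property)

noncomputable def weightedColimit : SmallPresheaf K ⥤ Type v where
  obj X := colimit (weightedColimitDiagram G X.obj)
  map τ := colimMap (Functor.whiskerLeft (CategoryOfElements.π G).op τ.hom)

lemma colimit_ι_weightedColimitDiagram_map {X : Kᵒᵖ ⥤ Type v}
    [HasColimit (weightedColimitDiagram G X)] {k k' : K} (f : k ⟶ k') (s : G.obj k)
    (x : X.obj (op k')) :
    colimit.ι (weightedColimitDiagram G X) (op (G.elementsMk k' (G.map f s))) x =
      colimit.ι (weightedColimitDiagram G X) (op (G.elementsMk k s)) (X.map f.op x) :=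
  (colimit.w_apply (weightedColimitDiagram G X)
    (Quiver.Hom.op (⟨f, rfl⟩ : G.elementsMk k s ⟶ G.elementsMk k' (G.map f s))) x).symm

lemma weightedColimit_map_ι {X Y : SmallPresheaf K} (τ : X ⟶ Y) (e : G.Elements)
    (x : X.obj.obj (op e.1)) :
    (weightedColimit G).map τ (colimit.ι (weightedColimitDiagram G X.obj) (op e) x) =
      colimit.ι (weightedColimitDiagram G Y.obj) (op e) (τ.hom.app (op e.1) x) :=
  ConcreteCategory.congr_hom
    (ι_colimMap (Functor.whiskerLeft (CategoryOfElements.π G).op τ.hom) (op e)) x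

noncomputable def weightedColimitUnit : G ⟶ smallYoneda K ⋙ weightedColimit G where
  app k := TypeCat.ofHom fun s => colimit.ι (weightedColimitDiagram G ((smallYoneda K).obj k).obj)
    (op (G.elementsMk k s)) (smallYonedaEquiv (𝟙 ((smallYoneda K).obj k)))
  naturality k k' f := by
    ext s
    change colimit.ι (weightedColimitDiagram G ((smallYoneda K).obj k').obj)
        (op (G.elementsMk k' (G.map f s))) (smallYonedaEquiv (𝟙 ((smallYoneda K).obj k'))) =
      (weightedColimit G).map ((smallYoneda K).map f)
        (colimit.ι (weightedColimitDiagram G ((smallYoneda K).obj k).obj)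
          (op (G.elementsMk k s)) (smallYonedaEquiv (𝟙 ((smallYoneda K).obj k))))
    rw [colimit_ι_weightedColimitDiagram_map, weightedColimit_map_ι]
    congr 1
    rw [← smallYonedaEquiv_comp, Category.id_comp]
    exact (smallYonedaEquiv_naturality _ f).symm.trans (congrArg _ (Category.comp_id _))

lemma weightedColimit_map_unit {X : SmallPresheaf K} (e : G.Elements)
    (f : (smallYoneda K).obj e.1 ⟶ X) :
    (weightedColimit G).map f ((weightedColimitUnit G).app e.1 e.2) =
      colimit.ι (weightedColimitDiagram G X.obj) (op e) (smallYonedaEquiv f) :=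
  (weightedColimit_map_ι G f e _).trans (congrArg _
    ((smallYonedaEquiv_comp _ f).symm.trans (congrArg _ (Category.id_comp f))))

lemma colimit_ι_eq_weightedColimit_map_unit {X : SmallPresheaf K} (e : G.Elements)
    (x : X.obj.obj (op e.1)) :
    colimit.ι (weightedColimitDiagram G X.obj) (op e) x =
      (weightedColimit G).map (smallYonedaEquiv.symm x) ((weightedColimitUnit G).app e.1 e.2) :=
  ((weightedColimit_map_unit G e _).trans
    (congrArg (colimit.ι (weightedColimitDiagram G X.obj) _) (Equiv.apply_symm_apply _ x))).symm

noncomputable def weightedColimitIsPointwiseLeftKanExtension :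
    (Functor.LeftExtension.mk _ (weightedColimitUnit G)).IsPointwiseLeftKanExtension := fun X =>
  { desc c := colimit.desc (weightedColimitDiagram G X.obj)
      { pt := c.pt
        ι :=
          { app e := TypeCat.ofHom fun x =>
              c.ι.app (CostructuredArrow.mk (smallYonedaEquiv.symm x)) e.unop.2
            naturality e e' g := by
              ext x
              change c.ι.app (CostructuredArrow.mk (smallYonedaEquiv.symm
                  (X.obj.map g.unop.1.op x))) e'.unop.2 =
                c.ι.app (CostructuredArrow.mk (smallYonedaEquiv.symm x)) e.unop.2
              exact (congrArg (fun φ => c.ι.app (CostructuredArrow.mk φ) e'.unop.2)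
                (smallYonedaEquiv_symm_map _ x)).trans
                ((CostructuredArrow.cocone_ι_app_mk_map_comp c _ _ _).trans
                  (congrArg _ g.unop.2)) } }
    fac c f := by
      ext s
      refine (congrArg (colimit.desc (weightedColimitDiagram G X.obj) _)
        (weightedColimit_map_unit G ⟨f.left, s⟩ f.hom)).trans ?_
      refine (colimit.ι_desc_apply _ _ _).trans ?_
      exact congrArg (fun φ => c.ι.app (CostructuredArrow.mk φ) s) (Equiv.symm_apply_apply _ _)
    uniq c m hm := by
      refine ConcreteCategory.hom_ext _ _ fun t => ?_
      obtain ⟨⟨e⟩, x, rfl⟩ := Types.jointly_surjective' (F := weightedColimitDiagram G X.obj) t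
      calc m (colimit.ι (weightedColimitDiagram G X.obj) (op e) x)
          = m ((weightedColimit G).map (smallYonedaEquiv.symm x)
              ((weightedColimitUnit G).app e.1 e.2)) :=
            congrArg m (colimit_ι_eq_weightedColimit_map_unit G e x)
        _ = c.ι.app (CostructuredArrow.mk (smallYonedaEquiv.symm x)) e.2 :=
            ConcreteCategory.congr_hom (hm (CostructuredArrow.mk (smallYonedaEquiv.symm x))) e.2
        _ = _ := by erw [colimit.ι_desc_apply]; rfl }

end WeightedColimit

section Continuity

variable {K : Type u} [Category.{v} K] [HasLimitsOfSize.{v, v} K] (G : K ⥤ Type v)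
  [PreservesLimitsOfSize.{v, v} G] {J : Type v} [SmallCategory J] {D : J ⥤ SmallPresheaf K}
  {c : Cone D}

lemma weightedColimit_map_π_injective (hc : IsLimit c) (z z' : (weightedColimit G).obj c.pt)
    (h : ∀ j, (weightedColimit G).map (c.π.app j) z = (weightedColimit G).map (c.π.app j) z') :
    z = z' := by
  obtain ⟨⟨e⟩, x, x', rfl, rfl⟩ :=
    Types.FilteredColimit.jointly_surjective_of_isColimit₂ (colimit.isColimit _) z z'
  have hπ : ∀ j, colimit.ι (weightedColimitDiagram G (D.obj j).obj) (op e)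
      ((c.π.app j).hom.app _ x) = colimit.ι (weightedColimitDiagram G (D.obj j).obj) (op e)
        ((c.π.app j).hom.app _ x') := fun j =>
    (weightedColimit_map_ι G _ e x).symm.trans ((h j).trans (weightedColimit_map_ι G _ e x'))
  obtain ⟨e', f, hf⟩ := Types.exists_map_eq_of_forall_colimit_ι_eq _ _ _ hπ
  have hxx' : c.pt.obj.map f.unop.1.op x = c.pt.obj.map f.unop.1.op x' := by
    refine Concrete.isLimit_ext _ (isLimitOfPreserves (smallPresheafEvaluation e'.unop.1) hc) _ _
      fun j => ?_
    exact (NatTrans.naturality_apply (c.π.app j).hom _ x).trans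
      ((hf j).trans (NatTrans.naturality_apply (c.π.app j).hom _ x').symm)
  exact (colimit.w_apply (weightedColimitDiagram G c.pt.obj) f x).symm.trans
    ((congrArg _ hxx').trans (colimit.w_apply (weightedColimitDiagram G c.pt.obj) f x'))

lemma exists_weightedColimit_map_π_eq (hc : IsLimit c) (s : ∀ j, (weightedColimit G).obj (D.obj j))
    (hs : ∀ {j j'} (φ : j ⟶ j'), (weightedColimit G).map (D.map φ) (s j) = s j') :
    ∃ z : (weightedColimit G).obj c.pt, ∀ j, (weightedColimit G).map (c.π.app j) z = s j := by
  obtain ⟨⟨e⟩, x, hx⟩ :=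
    Types.exists_common_colimit_ι_eq (fun j => weightedColimitDiagram G (D.obj j).obj) s
  have hcompat : ∀ p : Σ j j' : J, j ⟶ j',
      colimit.ι (weightedColimitDiagram G (D.obj p.2.1).obj) (op e)
        ((D.map p.2.2).hom.app _ (x p.1)) =
      colimit.ι (weightedColimitDiagram G (D.obj p.2.1).obj) (op e) (x p.2.1) := fun ⟨j, j', φ⟩ =>
    (weightedColimit_map_ι G _ e _).symm.trans
      ((congrArg _ (hx j)).trans ((hs φ).trans (hx j').symm))
  obtain ⟨e', f, hf⟩ := Types.exists_map_eq_of_forall_colimit_ι_eq _ _ _ hcompat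
  obtain ⟨w, hw⟩ := ((Types.isLimit_iff _).1
    ⟨isLimitOfPreserves (smallPresheafEvaluation e'.unop.1) hc⟩
    (fun j => (D.obj j).obj.map f.unop.1.op (x j)) fun {j j'} φ =>
      (NatTrans.naturality_apply (D.map φ).hom _ (x j)).trans (hf ⟨j, j', φ⟩)).exists
  refine ⟨colimit.ι (weightedColimitDiagram G c.pt.obj) e' w, fun j => ?_⟩
  refine (weightedColimit_map_ι G _ e'.unop w).trans ?_
  exact (congrArg _ (hw j)).trans
    ((colimit.w_apply (weightedColimitDiagram G (D.obj j).obj) f (x j)).trans (hx j))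

theorem preservesLimitsOfSize_weightedColimit :
    PreservesLimitsOfSize.{v, v} (weightedColimit G) :=
  ⟨⟨⟨fun hc => (Types.isLimit_iff _).2 fun s hs => by
    obtain ⟨z, hz⟩ := exists_weightedColimit_map_π_eq G hc s hs
    exact ⟨z, hz, fun z' hz' =>
      weightedColimit_map_π_injective G hc z' z fun j => (hz' j).trans (hz j).symm⟩⟩⟩⟩

end Continuity

/-- If `K` is complete and `G : K ⥤ Set` is continuous, then the left Kan
extension of `G` along the Yoneda embedding `Y : K ⥤ PK` is continuous. -/
theorem statement14 {K : Type u} [Category.{v} K] [HasLimitsOfSize.{v, v} K]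
    (G : K ⥤ Type v) [PreservesLimitsOfSize.{v, v} G]
    (T : SmallPresheaf K ⥤ Type v) (α : G ⟶ smallYoneda K ⋙ T)
    (hT : T.IsLeftKanExtension α) :
    PreservesLimitsOfSize.{v, v} T := by
  have : (weightedColimit G).IsLeftKanExtension (weightedColimitUnit G) :=
    (weightedColimitIsPointwiseLeftKanExtension G).isLeftKanExtension
  have := preservesLimitsOfSize_weightedColimit G
  exact preservesLimits_of_natIso
    (Functor.leftKanExtensionUnique T α (weightedColimit G) (weightedColimitUnit G)).symm
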